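/- (Corollary, interior midpoint exactness for quadratics) Let u(x) = a x² + b x + c with a, b, c ∈ ℝ. Then for every interior index 1 ≤ i ≤ n−1, the recovered gradient value satisfies g_i = u'(x̃_i), where x̃_i = (x_{i−1} + x_{i+1})/2. -/

import Mathlib

open intervalIntegral

/-- The standard hat (piecewise linear nodal) basis function `φ_i` associated with the
partition `x 0 < x 1 < ... < x n`.  The branch on `[x_{i-1}, x_i]` is omitted when `i = 0`
and the branch on `[x_i, x_{i+1}]` is omitted when `i = n`. -/
noncomputable def hatFn (x : ℕ → ℝ) (n i : ℕ) : ℝ → ℝ := fun t =>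
  if 0 < i ∧ x (i-1) ≤ t ∧ t ≤ x i then (t - x (i-1)) / (x i - x (i-1))
  else if i < n ∧ x i ≤ t ∧ t ≤ x (i+1) then (x (i+1) - t) / (x (i+1) - x i)
  else 0

/-- The biorthogonal basis function `λ_i`. -/
noncomputable def biorthFn (x : ℕ → ℝ) (n i : ℕ) : ℝ → ℝ := fun t =>
  if 0 < i ∧ x (i-1) ≤ t ∧ t < x i then (2*(t - x (i-1)) + (t - x i)) / (x i - x (i-1))
  else if i < n ∧ x i ≤ t ∧ t < x (i+1) then (2*(t - x (i+1)) + (t - x i)) / (x i - x (i+1))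
  else 0

/-- The piecewise derivative `u_h'` of the interpolant `u_h = Σ_j u(x_j) φ_j`:
on each open subinterval `(x_j, x_{j+1})` it is the constant
`(u(x_{j+1}) - u(x_j)) / (x_{j+1} - x_j)`, and it is (arbitrarily) `0` at grid points and
outside `[x 0, x n]`. -/
noncomputable def interpDeriv (x : ℕ → ℝ) (n : ℕ) (u : ℝ → ℝ) : ℝ → ℝ := fun t =>
  ∑ j ∈ Finset.range n,
    if x j < t ∧ t < x (j+1) then (u (x (j+1)) - u (x j)) / (x (j+1) - x j) else 0

/-- The recovered gradient value
`g_i = (∫_α^β u_h' λ_i dx) / (∫_α^β φ_i λ_i dx)` with `α = x 0`, `β = x n`. -/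
noncomputable def recGrad (x : ℕ → ℝ) (n : ℕ) (u : ℝ → ℝ) (i : ℕ) : ℝ :=
  (∫ t in (x 0)..(x n), interpDeriv x n u t * biorthFn x n i t) /
  (∫ t in (x 0)..(x n), hatFn x n i t * biorthFn x n i t)

/-!
On each of the two elements adjacent to an interior node `x_i`, `λ_i` integrates to half the
element length, and so does `φ_i λ_i`. Since `u_h'` is the slope of `u` on each element, the
numerator of `g_i` telescopes to `(u(x_{i+1}) - u(x_{i-1}))/2` and the denominator is
`(x_{i+1} - x_{i-1})/2`: for every `u`, `g_i` is the difference quotient of `u` over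
`[x_{i-1}, x_{i+1}]`, which for a quadratic is `u'` at the midpoint.
-/

open Set
open MeasureTheory (volume)

theorem IntervalIntegrable.of_eqOn_Ioo {f g : ℝ → ℝ} {p q : ℝ} (hpq : p ≤ q)
    (hg : IntervalIntegrable g volume p q) (h : EqOn f g (Ioo p q)) :
    IntervalIntegrable f volume p q := by
  rw [intervalIntegrable_iff_integrableOn_Ioo_of_le hpq] at hg ⊢
  exact hg.congr_fun h.symm measurableSet_Ioo

theorem intervalIntegral.integral_congr_Ioo {f g : ℝ → ℝ} {p q : ℝ} (hpq : p ≤ q)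
    (h : EqOn f g (Ioo p q)) : ∫ t in p..q, f t = ∫ t in p..q, g t := by
  rw [integral_of_le hpq, integral_of_le hpq, MeasureTheory.integral_Ioc_eq_integral_Ioo,
    MeasureTheory.integral_Ioc_eq_integral_Ioo]
  exact MeasureTheory.setIntegral_congr_fun measurableSet_Ioo h

theorem intervalIntegral.integral_eq_add_of_eqOn_Ioo {F gl gr : ℝ → ℝ} {a p q r b : ℝ}
    (hap : a ≤ p) (hpq : p ≤ q) (hqr : q ≤ r) (hrb : r ≤ b)
    (hgl : IntervalIntegrable gl volume p q) (hgr : IntervalIntegrable gr volume q r)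
    (h₀ : EqOn F 0 (Ioo a p)) (hl : EqOn F gl (Ioo p q)) (hr : EqOn F gr (Ioo q r))
    (h₁ : EqOn F 0 (Ioo r b)) :
    ∫ t in a..b, F t = (∫ t in p..q, gl t) + ∫ t in q..r, gr t := by
  have i₀ := IntervalIntegrable.of_eqOn_Ioo hap intervalIntegrable_const h₀
  have il := IntervalIntegrable.of_eqOn_Ioo hpq hgl hl
  have ir := IntervalIntegrable.of_eqOn_Ioo hqr hgr hr
  have i₁ := IntervalIntegrable.of_eqOn_Ioo hrb intervalIntegrable_const h₁
  rw [← integral_add_adjacent_intervals i₀ (il.trans (ir.trans i₁)),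
    ← integral_add_adjacent_intervals il (ir.trans i₁), ← integral_add_adjacent_intervals ir i₁,
    integral_congr_Ioo hap h₀, integral_congr_Ioo hpq hl, integral_congr_Ioo hqr hr,
    integral_congr_Ioo hrb h₁]
  simp

/- On an element with endpoints `a` and `q = x_i`, the functions `φ_i` and `λ_i` are
`hatPiece a q` and `biorthPiece a q`; `a` is `x_{i-1}` or `x_{i+1}`. -/
noncomputable def hatPiece (a q t : ℝ) : ℝ := (t - a) / (q - a)

noncomputable def biorthPiece (a q t : ℝ) : ℝ := (2 * (t - a) + (t - q)) / (q - a)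

theorem continuous_hatPiece (a q : ℝ) : Continuous (hatPiece a q) := by
  unfold hatPiece; fun_prop

theorem continuous_biorthPiece (a q : ℝ) : Continuous (biorthPiece a q) := by
  unfold biorthPiece; fun_prop

theorem integral_biorthPiece (a q : ℝ) : ∫ t in a..q, biorthPiece a q t = (q - a) / 2 := by
  have hform : ∀ t, biorthPiece a q t = (3 * (t - a) - (q - a)) / (q - a) := fun t => by
    unfold biorthPiece; ring
  simp only [hform]
  rw [integral_comp_sub_right (fun s => (3 * s - (q - a)) / (q - a)), integral_div,
    integral_sub (intervalIntegrable_id.const_mul 3) intervalIntegrable_const, integral_const_mul,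
    integral_id, intervalIntegral.integral_const, smul_eq_mul]
  rcases eq_or_ne (q - a) 0 with h | h
  · simp [h]
  · field_simp; ring

theorem integral_hatPiece_mul_biorthPiece (a q : ℝ) :
    ∫ t in a..q, hatPiece a q t * biorthPiece a q t = (q - a) / 2 := by
  have hform : ∀ t, hatPiece a q t * biorthPiece a q t
      = (3 * (t - a) ^ 2 - (q - a) * (t - a)) / (q - a) ^ 2 := fun t => by
    rw [hatPiece, biorthPiece, div_mul_div_comm, ← sq]; ring
  simp only [hform]
  rw [integral_comp_sub_right (fun s => (3 * s ^ 2 - (q - a) * s) / (q - a) ^ 2),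
    integral_div, integral_sub ((intervalIntegrable_pow 2).const_mul 3)
      (intervalIntegrable_id.const_mul (q - a)), integral_const_mul, integral_const_mul,
    integral_pow, integral_id]
  rcases eq_or_ne (q - a) 0 with h | h
  · simp [h]
  · field_simp; ring

section Grid

variable {x : ℕ → ℝ} {n i : ℕ} {t : ℝ}

theorem interpDeriv_of_mem_Ioo (hx : StrictMonoOn x (Iic n)) (u : ℝ → ℝ) {j : ℕ} (hj : j < n)
    (ht : t ∈ Ioo (x j) (x (j + 1))) :
    interpDeriv x n u t = (u (x (j + 1)) - u (x j)) / (x (j + 1) - x j) := by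
  have hle : ∀ {k l}, k ≤ l → l ≤ n → x k ≤ x l := fun hkl hl =>
    hx.monotoneOn (mem_Iic.2 (hkl.trans hl)) (mem_Iic.2 hl) hkl
  rw [interpDeriv, Finset.sum_eq_single_of_mem j (Finset.mem_range.2 hj), if_pos ⟨ht.1, ht.2⟩]
  intro k hk hkj
  have hk : k < n := Finset.mem_range.1 hk
  rw [if_neg]
  rintro ⟨hkt, htk⟩
  rcases Nat.lt_or_gt_of_ne hkj with hlt | hgt
  · exact (hle hlt hj.le).not_gt (ht.1.trans htk)
  · exact (hle hgt hk.le).not_gt (hkt.trans ht.2)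

theorem hatFn_of_mem_Ioo_left (hi : 0 < i) (ht : t ∈ Ioo (x (i - 1)) (x i)) :
    hatFn x n i t = hatPiece (x (i - 1)) (x i) t := by
  rw [hatFn, if_pos ⟨hi, ht.1.le, ht.2.le⟩, hatPiece]

theorem hatFn_of_mem_Ioo_right (hin : i < n) (ht : t ∈ Ioo (x i) (x (i + 1))) :
    hatFn x n i t = hatPiece (x (i + 1)) (x i) t := by
  rw [hatFn, if_neg fun h => h.2.2.not_gt ht.1, if_pos ⟨hin, ht.1.le, ht.2.le⟩, hatPiece,
    ← neg_div_neg_eq, neg_sub, neg_sub]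

theorem biorthFn_of_mem_Ioo_left (hi : 0 < i) (ht : t ∈ Ioo (x (i - 1)) (x i)) :
    biorthFn x n i t = biorthPiece (x (i - 1)) (x i) t := by
  rw [biorthFn, if_pos ⟨hi, ht.1.le, ht.2⟩, biorthPiece]

theorem biorthFn_of_mem_Ioo_right (hin : i < n) (ht : t ∈ Ioo (x i) (x (i + 1))) :
    biorthFn x n i t = biorthPiece (x (i + 1)) (x i) t := by
  rw [biorthFn, if_neg fun h => h.2.2.not_ge ht.1.le, if_pos ⟨hin, ht.1.le, ht.2⟩, biorthPiece]

theorem biorthFn_of_lt (hle : x (i - 1) ≤ x i) (ht : t < x (i - 1)) : biorthFn x n i t = 0 := by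
  rw [biorthFn, if_neg fun h => h.2.1.not_gt ht, if_neg fun h => h.2.1.not_gt (ht.trans_le hle)]

theorem biorthFn_of_ge (hle : x i ≤ x (i + 1)) (ht : x (i + 1) ≤ t) : biorthFn x n i t = 0 := by
  rw [biorthFn, if_neg fun h => h.2.2.not_ge (hle.trans ht), if_neg fun h => h.2.2.not_ge ht]

theorem integral_mul_biorthFn (hx : StrictMonoOn x (Iic n)) (hi : 0 < i) (hin : i < n)
    {f gl gr : ℝ → ℝ} (hgl : Continuous gl) (hgr : Continuous gr)
    (hl : EqOn f gl (Ioo (x (i - 1)) (x i))) (hr : EqOn f gr (Ioo (x i) (x (i + 1)))) :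
    ∫ t in x 0..x n, f t * biorthFn x n i t =
      (∫ t in x (i - 1)..x i, gl t * biorthPiece (x (i - 1)) (x i) t) +
        ∫ t in x i..x (i + 1), gr t * biorthPiece (x (i + 1)) (x i) t := by
  have hpq : x (i - 1) < x i := hx (mem_Iic.2 (by omega)) (mem_Iic.2 hin.le) (by omega)
  have hqr : x i < x (i + 1) := hx (mem_Iic.2 hin.le) (mem_Iic.2 hin) (by omega)
  refine integral_eq_add_of_eqOn_Ioo
    (hx.monotoneOn (mem_Iic.2 (Nat.zero_le n)) (mem_Iic.2 (by omega)) (Nat.zero_le _))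
    hpq.le hqr.le (hx.monotoneOn (mem_Iic.2 hin) (mem_Iic.2 le_rfl) hin)
    ((hgl.mul (continuous_biorthPiece _ _)).intervalIntegrable _ _)
    ((hgr.mul (continuous_biorthPiece _ _)).intervalIntegrable _ _) ?_ ?_ ?_ ?_
  · intro t ht
    simp [biorthFn_of_lt hpq.le ht.2]
  · intro t ht
    dsimp only
    rw [hl ht, biorthFn_of_mem_Ioo_left hi ht]
  · intro t ht
    dsimp only
    rw [hr ht, biorthFn_of_mem_Ioo_right hin ht]
  · intro t ht
    simp [biorthFn_of_ge hqr.le ht.1.le]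

theorem recGrad_eq_slope (hx : StrictMonoOn x (Iic n)) (hi : 0 < i) (hin : i < n)
    (u : ℝ → ℝ) :
    recGrad x n u i = (u (x (i + 1)) - u (x (i - 1))) / (x (i + 1) - x (i - 1)) := by
  have hi' : i - 1 + 1 = i := Nat.sub_add_cancel hi
  have hpq : x i - x (i - 1) ≠ 0 :=
    sub_ne_zero.2 (hx (mem_Iic.2 (by omega)) (mem_Iic.2 hin.le) (by omega)).ne'
  have hqr : x (i + 1) - x i ≠ 0 :=
    sub_ne_zero.2 (hx (mem_Iic.2 hin.le) (mem_Iic.2 hin) (by omega)).ne'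
  have numerator : ∫ t in x 0..x n, interpDeriv x n u t * biorthFn x n i t
      = (u (x (i + 1)) - u (x (i - 1))) / 2 := by
    rw [integral_mul_biorthFn hx hi hin continuous_const continuous_const
      (fun t ht => interpDeriv_of_mem_Ioo hx u (by omega) (hi' ▸ ht))
      (fun t ht => interpDeriv_of_mem_Ioo hx u hin ht), integral_const_mul, integral_const_mul,
      integral_biorthPiece, integral_symm, integral_biorthPiece]
    simp only [hi']
    field_simp
    ring
  have denominator : ∫ t in x 0..x n, hatFn x n i t * biorthFn x n i t
      = (x (i + 1) - x (i - 1)) / 2 := by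
    rw [integral_mul_biorthFn hx hi hin (continuous_hatPiece _ _) (continuous_hatPiece _ _)
      (fun t ht => hatFn_of_mem_Ioo_left hi ht) (fun t ht => hatFn_of_mem_Ioo_right hin ht),
      integral_hatPiece_mul_biorthPiece, integral_symm, integral_hatPiece_mul_biorthPiece]
    ring
  rw [recGrad, numerator, denominator, div_div_div_cancel_right₀ two_ne_zero]

end Grid

theorem recGrad_quadratic_midpoint_interior_general (n : ℕ) (x : ℕ → ℝ)
    (hx : ∀ i < n, x i < x (i+1)) (a b c : ℝ) :
    ∀ i : ℕ, 1 ≤ i → i < n →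
      recGrad x n (fun t => a * t^2 + b * t + c) i
        = 2 * a * ((x (i-1) + x (i+1)) / 2) + b := by
  intro i hi hin
  have hmono : StrictMonoOn x (Iic n) := strictMonoOn_Iic_of_lt_succ hx
  have hpr : x (i + 1) - x (i - 1) ≠ 0 :=
    sub_ne_zero.2 (hmono (mem_Iic.2 (by omega)) (mem_Iic.2 hin) (by omega)).ne'
  rw [recGrad_eq_slope hmono hi hin, div_eq_iff hpr]
  ring

/-- interior midpoint exactness for quadratics: for `u(x) = a x² + b x + c`
and every interior index `1 ≤ i ≤ n-1`, `g_i = u'(x̃_i)` where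
`x̃_i = (x_{i-1} + x_{i+1})/2` (and `u'(t) = 2 a t + b`). -/
theorem recGrad_quadratic_midpoint_interior (n : ℕ) (x : ℕ → ℝ) (hn : 2 ≤ n)
    (hx : ∀ i < n, x i < x (i+1)) (a b c : ℝ) :
    ∀ i : ℕ, 1 ≤ i → i < n →
      recGrad x n (fun t => a * t^2 + b * t + c) i
        = 2 * a * ((x (i-1) + x (i+1)) / 2) + b :=
  recGrad_quadratic_midpoint_interior_general n x hx a b c
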